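/- For every n ≥ 0 and all i, j ≥ 0, the counts s_{m,i,j} = #{π ∈ S_m : cpk^o(π) = i, cpk^e(π) = j} satisfy the Schett–Dumont recurrence s_{2n+1,i,j} = (2i+1)·s_{2n,i,j} + (2j+2)·s_{2n,i−1,j+1} + (2n−2i−2j+2)·s_{2n,i−1,j}, where any term with a negative index is interpreted as 0. -/

import Mathlib

open Finset

/-- Number of odd cycle peaks of a permutation of `[n]` (the element `i : Fin n`
represents the value `i+1 ∈ {1,…,n}`). -/
def cpko (n : ℕ) (π : Equiv.Perm (Fin n)) : ℕ :=
  (Finset.univ.filter fun i : Fin n => π.symm i < i ∧ π i < i ∧ Odd ((i : ℕ) + 1)).card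

/-- Number of even cycle peaks of a permutation of `[n]`. -/
def cpke (n : ℕ) (π : Equiv.Perm (Fin n)) : ℕ :=
  (Finset.univ.filter fun i : Fin n => π.symm i < i ∧ π i < i ∧ Even ((i : ℕ) + 1)).card

/-- `s m i j = #{π ∈ S_m : cpk^o(π) = i, cpk^e(π) = j}`. -/
def s (m i j : ℕ) : ℕ :=
  (Finset.univ.filter fun π : Equiv.Perm (Fin m) => cpko m π = i ∧ cpke m π = j).card

/-!
Every `π ∈ S_{m+1}` arises in exactly one way from some `σ ∈ S_m` by inserting the letter `m+1`
either as a new fixed point or into a cycle of `σ` just before a letter `y`. A new fixed point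
changes no cycle peak. Inserted before `y`, the letter `m+1` is itself a cycle peak, and it
destroys the peak at `y` or at `σ⁻¹ y` if there is one; at most one of them can be a peak.
Take `m = 2n`, so that the new peak `2n+1` is odd. If `σ` has `o` odd and `e` even peaks, then
`2o + 1` of the `2n + 1` insertions keep the pair `(o, e)`, `2e` give `(o + 1, e - 1)`, and the
remaining `2n - 2o - 2e` give `(o + 1, e)`. Summing over `σ` gives the recurrence.
-/

open Equiv

lemma Fin.card_filter_univ_castSucc {m : ℕ} (P : Fin (m + 1) → Prop) [DecidablePred P] :
    #{w | P w} = #{z : Fin m | P z.castSucc} + if P (Fin.last m) then 1 else 0 := by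
  simp only [card_filter, Fin.sum_univ_castSucc]

lemma card_filter_ne_add_ite_add_ite {α : Type*} [Fintype α] [DecidableEq α] (f : Perm α)
    (Q : α → Prop) [DecidablePred Q] (hQ : ∀ z, Q z → ¬ Q (f z)) (y : α) :
    #{z | Q z ∧ z ≠ y ∧ f z ≠ y} + (if Q y then 1 else 0) + (if Q (f.symm y) then 1 else 0)
      = #{z | Q z} := by
  have split : ∀ z, (if Q z then 1 else 0) = (if Q z ∧ z ≠ y ∧ f z ≠ y then 1 else 0)
      + (if z = y then (if Q z then 1 else 0) else 0)
      + (if z = f.symm y then (if Q z then 1 else 0) else 0) := by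
    intro z
    simp only [Equiv.eq_symm_apply]
    by_cases hzy : z = y
    · subst hzy
      by_cases hfz : f z = z
      · have : ¬ Q z := fun h => hQ z h (by rwa [hfz])
        simp [this]
      · simp [hfz]
    · by_cases hfz : f z = y <;> simp [hzy, hfz]
  simp only [card_filter, sum_congr rfl fun z _ => split z, sum_add_distrib, sum_ite_eq',
    mem_univ, if_true]

namespace CyclePeak

variable {m : ℕ}

def IsCyclePeak (π : Perm (Fin m)) (i : Fin m) : Prop := π.symm i < i ∧ π i < i

instance (π : Perm (Fin m)) : DecidablePred (IsCyclePeak π) :=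
  fun _ => inferInstanceAs (Decidable (_ ∧ _))

lemma IsCyclePeak.not_apply {π : Perm (Fin m)} {i : Fin m} (h : IsCyclePeak π i) :
    ¬ IsCyclePeak π (π i) := fun h' =>
  lt_asymm (by simpa using h'.1) h.2

def peakCount (p : ℕ → Prop) [DecidablePred p] (π : Perm (Fin m)) : ℕ :=
  #{i | IsCyclePeak π i ∧ p (i + 1)}

lemma cpko_eq_peakCount (π : Perm (Fin m)) : cpko m π = peakCount Odd π := by
  simp only [cpko, peakCount, IsCyclePeak, and_assoc]

lemma cpke_eq_peakCount (π : Perm (Fin m)) : cpke m π = peakCount Even π := by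
  simp only [cpke, peakCount, IsCyclePeak, and_assoc]

/-- `insertLast (x, σ)` sends `m+1 ↦ x` and `σ⁻¹ x ↦ m+1` and agrees with `σ` elsewhere: the
letter `m+1` (that is, `Fin.last m`) is inserted into the cycle of `σ` just before `x`, or as a
fixed point when `x = m+1`. -/
def insertLast : Fin (m + 1) × Perm (Fin m) ≃ Perm (Fin (m + 1)) :=
  (finSuccEquivLast.prodCongr (.refl _)).trans <|
    Perm.decomposeOption.symm.trans (permCongr finSuccEquivLast.symm)

@[simp] lemma insertLast_apply_last (x : Fin (m + 1)) (σ : Perm (Fin m)) :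
    insertLast (x, σ) (Fin.last m) = x := by
  simp [insertLast, permCongr_apply]

lemma insertLast_apply_castSucc (x : Fin (m + 1)) (σ : Perm (Fin m)) (z : Fin m) :
    insertLast (x, σ) z.castSucc
      = if (σ z).castSucc = x then Fin.last m else (σ z).castSucc := by
  by_cases h : (σ z).castSucc = x <;>
    simp [insertLast, permCongr_apply, swap_apply_def, ← Equiv.symm_apply_eq, h]

@[simp] lemma insertLast_last_apply_castSucc (σ : Perm (Fin m)) (z : Fin m) :
    insertLast (Fin.last m, σ) z.castSucc = (σ z).castSucc := by
  simp [insertLast_apply_castSucc, Fin.castSucc_ne_last]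

lemma insertLast_castSucc_apply_castSucc (y : Fin m) (σ : Perm (Fin m)) (z : Fin m) :
    insertLast (y.castSucc, σ) z.castSucc
      = if σ z = y then Fin.last m else (σ z).castSucc := by
  simp [insertLast_apply_castSucc]

@[simp] lemma insertLast_last_symm_apply_castSucc (σ : Perm (Fin m)) (z : Fin m) :
    (insertLast (Fin.last m, σ)).symm z.castSucc = (σ.symm z).castSucc := by
  simp [Equiv.symm_apply_eq]

lemma insertLast_castSucc_symm_apply_castSucc (y : Fin m) (σ : Perm (Fin m)) (z : Fin m) :
    (insertLast (y.castSucc, σ)).symm z.castSucc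
      = if z = y then Fin.last m else (σ.symm z).castSucc := by
  split_ifs with h <;> simp [Equiv.symm_apply_eq, insertLast_castSucc_apply_castSucc, h]

lemma insertLast_castSucc_symm_apply_last (y : Fin m) (σ : Perm (Fin m)) :
    (insertLast (y.castSucc, σ)).symm (Fin.last m) = (σ.symm y).castSucc := by
  simp [Equiv.symm_apply_eq, insertLast_castSucc_apply_castSucc]

lemma isCyclePeak_insertLast_last_castSucc (σ : Perm (Fin m)) (z : Fin m) :
    IsCyclePeak (insertLast (Fin.last m, σ)) z.castSucc ↔ IsCyclePeak σ z := by
  simp [IsCyclePeak]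

lemma not_isCyclePeak_insertLast_last_last (σ : Perm (Fin m)) :
    ¬ IsCyclePeak (insertLast (Fin.last m, σ)) (Fin.last m) := by
  simp [IsCyclePeak]

lemma isCyclePeak_insertLast_castSucc_last (σ : Perm (Fin m)) (y : Fin m) :
    IsCyclePeak (insertLast (y.castSucc, σ)) (Fin.last m) := by
  simp [IsCyclePeak, insertLast_castSucc_symm_apply_last, Fin.castSucc_lt_last]

lemma isCyclePeak_insertLast_castSucc_castSucc (σ : Perm (Fin m)) (y z : Fin m) :
    IsCyclePeak (insertLast (y.castSucc, σ)) z.castSucc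
      ↔ IsCyclePeak σ z ∧ z ≠ y ∧ σ z ≠ y := by
  simp only [IsCyclePeak, insertLast_castSucc_symm_apply_castSucc,
    insertLast_castSucc_apply_castSucc]
  by_cases hz : z = y <;> by_cases hσz : σ z = y <;>
    simp [hz, hσz, Fin.le_last, not_lt_of_ge]

lemma peakCount_insertLast_last (p : ℕ → Prop) [DecidablePred p] (σ : Perm (Fin m)) :
    peakCount p (insertLast (Fin.last m, σ)) = peakCount p σ := by
  simp [peakCount, Fin.card_filter_univ_castSucc, isCyclePeak_insertLast_last_castSucc,
    not_isCyclePeak_insertLast_last_last]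

/-- The peaks of `σ` with value in `p` that are destroyed by inserting `m+1` before `y`. -/
def lostPeaks (p : ℕ → Prop) [DecidablePred p] (σ : Perm (Fin m)) (y : Fin m) : ℕ :=
  (if IsCyclePeak σ y ∧ p (y + 1) then 1 else 0)
    + (if IsCyclePeak σ (σ.symm y) ∧ p (σ.symm y + 1) then 1 else 0)

lemma peakCount_insertLast_castSucc (p : ℕ → Prop) [DecidablePred p] (σ : Perm (Fin m))
    (y : Fin m) :
    peakCount p (insertLast (y.castSucc, σ)) + lostPeaks p σ y
      = peakCount p σ + if p (m + 1) then 1 else 0 := by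
  rw [lostPeaks, ← add_assoc, peakCount, Fin.card_filter_univ_castSucc]
  simp only [isCyclePeak_insertLast_castSucc_castSucc, isCyclePeak_insertLast_castSucc_last,
    true_and, Fin.val_castSucc, Fin.val_last]
  rw [filter_congr fun z _ => and_right_comm, peakCount,
    ← card_filter_ne_add_ite_add_ite σ (fun z => IsCyclePeak σ z ∧ p (z + 1))
      (fun z hz h => hz.1.not_apply h.1) y]
  ring

lemma sum_lostPeaks (p : ℕ → Prop) [DecidablePred p] (σ : Perm (Fin m)) :
    ∑ y, lostPeaks p σ y = 2 * peakCount p σ := by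
  simp only [lostPeaks, sum_add_distrib,
    Equiv.sum_comp σ.symm fun z => if IsCyclePeak σ z ∧ p (z + 1) then 1 else 0,
    peakCount, card_filter]
  ring

lemma lostPeaks_odd_add_lostPeaks_even_le_one (σ : Perm (Fin m)) (y : Fin m) :
    lostPeaks Odd σ y + lostPeaks Even σ y ≤ 1 := by
  have hadj := fun h : IsCyclePeak σ (σ.symm y) => h.not_apply
  simp only [apply_symm_apply] at hadj
  unfold lostPeaks
  split_ifs <;> grind

/-- The peak pair after an insertion is `(o + 1 - u, e - v)`, where `u` and `v` count the
destroyed odd and even peaks. -/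
lemma indicator_eq_of_shift {o e o' e' i j u v : ℕ} (huv : u + v ≤ 1) (ho : o' + u = o + 1)
    (he : e' + v = e) :
    (if o' = i ∧ e' = j then 1 else 0 : ℤ)
      = u * (if o = i ∧ e = j then 1 else 0) + v * (if o + 1 = i ∧ e = j + 1 then 1 else 0)
        + (1 - u - v) * (if o + 1 = i ∧ e = j then 1 else 0) := by
  split_ifs <;> omega

lemma sum_indicator_insertLast (n i j : ℕ) (σ : Perm (Fin (2 * n))) :
    ∑ x, (if cpko (2 * n + 1) (insertLast (x, σ)) = i
        ∧ cpke (2 * n + 1) (insertLast (x, σ)) = j then 1 else 0 : ℤ)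
      = (2 * i + 1) * (if cpko (2 * n) σ = i ∧ cpke (2 * n) σ = j then 1 else 0)
        + (2 * j + 2) * (if cpko (2 * n) σ + 1 = i ∧ cpke (2 * n) σ = j + 1 then 1 else 0)
        + (2 * n - 2 * i - 2 * j + 2)
          * (if cpko (2 * n) σ + 1 = i ∧ cpke (2 * n) σ = j then 1 else 0) := by
  simp only [cpko_eq_peakCount, cpke_eq_peakCount]
  have insert_before : ∀ y : Fin (2 * n), _ := fun y => indicator_eq_of_shift (i := i) (j := j)
    (lostPeaks_odd_add_lostPeaks_even_le_one σ y)
    (by simpa using peakCount_insertLast_castSucc Odd σ y)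
    (by simpa [Nat.not_even_iff_odd] using peakCount_insertLast_castSucc Even σ y)
  rw [Fin.sum_univ_castSucc, sum_congr rfl fun y _ => insert_before y]
  simp only [peakCount_insertLast_last, sum_add_distrib, ← sum_mul, sum_sub_distrib,
    ← Nat.cast_sum, sum_lostPeaks]
  simp only [Nat.cast_mul, Nat.cast_ofNat, mul_ite, mul_one, mul_zero, sum_const, card_univ,
    Fintype.card_fin, Int.nsmul_eq_mul]
  split_ifs <;> omega

lemma card_filter_cpko_add_one (m i j : ℕ) :
    #{σ : Perm (Fin m) | cpko m σ + 1 = i ∧ cpke m σ = j}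
      = if i = 0 then 0 else s m (i - 1) j := by
  rcases i with _ | i <;> simp [s]

end CyclePeak

open CyclePeak

/-- The Schett–Dumont recurrence
`s_{2n+1,i,j} = (2i+1) s_{2n,i,j} + (2j+2) s_{2n,i-1,j+1} + (2n-2i-2j+2) s_{2n,i-1,j}`
for `n ≥ 0`, where terms with a negative index (i.e. with `i - 1 < 0`) are interpreted
as `0`. -/
theorem stmt10 (n : ℕ) (i j : ℕ) :
    (s (2 * n + 1) i j : ℤ) =
      (2 * (i : ℤ) + 1) * s (2 * n) i j
        + (2 * (j : ℤ) + 2) * (if i = 0 then 0 else (s (2 * n) (i - 1) (j + 1) : ℤ))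
        + (2 * (n : ℤ) - 2 * i - 2 * j + 2) *
            (if i = 0 then 0 else (s (2 * n) (i - 1) j : ℤ)) := by
  rw [s, natCast_card_filter, ← insertLast.sum_comp, Fintype.sum_prod_type_right]
  simp only [sum_indicator_insertLast, sum_add_distrib, ← mul_sum]
  simp only [← natCast_card_filter, card_filter_cpko_add_one, Nat.cast_ite, Nat.cast_zero]
  rfl
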